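/- Let G act freely by measure-preserving homeomorphisms on a locally compact Polish space T with a regular G-invariant Borel probability measure Λ. Let F ⊆ G be finite and B ⊆ T a Borel F-base with Λ(F·B) > 1 − ε. Then there exists a countable family {V_k} of pairwise disjoint open F-bases with Σ_k Λ(F·V_k) > 1 − ε. -/
import Mathlib

open MeasureTheory ENNReal Pointwise

/-- Open approximation to a Rohlin tower: if a group `G` acts freely by
measure-preserving homeomorphisms on a locally compact Polish space `T` with a regular
invariant Borel probability measure `Λ`, `F ⊆ G` is finite and `B` is a Borel `F`-base
with `Λ(F·B) > 1 - ε`, then there is a countable family of pairwise disjoint open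
`F`-bases `V k` with `Σ_k Λ(F·V k) > 1 - ε`. -/
theorem open_approximation_rohlin_tower {G T : Type*} [Group G]
    [TopologicalSpace T] [PolishSpace T] [LocallyCompactSpace T]
    [MeasurableSpace T] [BorelSpace T] [MulAction G T]
    (hcont : ∀ g : G, Continuous fun x : T => g • x)
    (hfree : ∀ (g : G) (x : T), g • x = x → g = 1)
    (Λ : Measure T) [IsProbabilityMeasure Λ] [Λ.Regular]
    (hinv : ∀ (g : G) (A : Set T), Λ (g • A) = Λ A)
    (F : Finset G) (B : Set T) (hB : MeasurableSet B)
    (hbase : (F : Set G).Pairwise fun f f' => Disjoint (f • B) (f' • B))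
    (ε : ℝ≥0∞) (hε : 0 < ε) (htower : 1 - ε < Λ (⋃ f ∈ F, f • B)) :
    ∃ V : ℕ → Set T, (∀ k, IsOpen (V k)) ∧ Pairwise (Function.onFun Disjoint V) ∧
      (∀ k, (F : Set G).Pairwise fun f f' => Disjoint (f • V k) (f' • V k)) ∧
      1 - ε < ∑' k, Λ (⋃ f ∈ F, f • V k) := by
  classical
  -- the slack
  set s : ℝ≥0∞ := Λ (⋃ f ∈ F, f • B) - (1 - ε) with hs_def
  have hμ1 : Λ (⋃ f ∈ F, f • B) ≤ 1 := prob_le_one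
  have hs0 : s ≠ 0 := by
    have : 0 < s := tsub_pos_of_lt htower
    exact this.ne'
  have hsT : s ≠ ∞ := by
    have : s ≤ 1 := le_trans (tsub_le_self) hμ1
    exact (lt_of_le_of_lt this one_lt_top).ne
  set c : ℝ≥0∞ := (F.card : ℝ≥0∞) + 1 with hc_def
  have hc0 : c ≠ 0 := by simp [hc_def]
  have hcT : c ≠ ∞ := by
    simp [hc_def]
  set η : ℝ≥0∞ := s / 2 / c with hη_def
  have hη0 : η ≠ 0 := by
    apply ne_of_gt
    exact ENNReal.div_pos (by simpa using hs0) hcT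
  have hcardη : (F.card : ℝ≥0∞) * η ≤ s / 2 := by
    calc (F.card : ℝ≥0∞) * η ≤ c * η :=
          mul_le_mul_left (by simp [hc_def, le_add_right]) η
      _ ≤ s / 2 := ENNReal.mul_div_le
  -- open F-base neighborhoods around every point
  have hbaseNbhd : ∀ x : T, ∃ U : Set T, IsOpen U ∧ x ∈ U ∧
      (F : Set G).Pairwise fun f f' => Disjoint (f • U) (f' • U) := by
    intro x
    have key : ∀ p : G × G, ∃ U : Set T, IsOpen U ∧ x ∈ U ∧
        (p.1 ≠ p.2 → Disjoint (p.1 • U) (p.2 • U)) := by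
      rintro ⟨f, f'⟩
      by_cases hne : f = f'
      · exact ⟨Set.univ, isOpen_univ, trivial, fun h => absurd hne h⟩
      · have hxx : f • x ≠ f' • x := by
          intro h
          apply hne
          have h1 : (f'⁻¹ * f) • x = x := by
            rw [mul_smul, h, inv_smul_smul]
          exact (inv_mul_eq_one.mp (hfree _ _ h1)).symm
        obtain ⟨u, v, hu, hv, hfu, hf'v, huv⟩ := t2_separation hxx
        refine ⟨(fun y : T => f • y) ⁻¹' u ∩ (fun y : T => f' • y) ⁻¹' v,
          (hu.preimage (hcont f)).inter (hv.preimage (hcont f')), ⟨hfu, hf'v⟩, fun _ => ?_⟩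
        apply huv.mono
        · rintro y ⟨z, hz, rfl⟩; exact hz.1
        · rintro y ⟨z, hz, rfl⟩; exact hz.2
    choose Up hUo hUx hUd using key
    refine ⟨⋂ p ∈ F ×ˢ F, Up p, isOpen_biInter_finset fun p _ => hUo p, ?_, ?_⟩
    · exact Set.mem_iInter₂.2 fun p _ => hUx p
    · intro f hf f' hf' hne
      have hp : (f, f') ∈ F ×ˢ F :=
        Finset.mem_product.mpr ⟨Finset.mem_coe.mp hf, Finset.mem_coe.mp hf'⟩
      have hsub : (⋂ p ∈ F ×ˢ F, Up p) ⊆ Up (f, f') := Set.biInter_subset_of_mem hp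
      exact (hUd (f, f') hne).mono (Set.smul_set_mono hsub) (Set.smul_set_mono hsub)
  choose U hUopen hUmem hUbase using hbaseNbhd
  -- compact K inside B
  have hημ : η / 2 ≠ 0 := by simpa using hη0
  obtain ⟨K, hKB, hKcomp, hKlt⟩ :=
    hB.exists_isCompact_lt_add (measure_ne_top Λ B) hημ
  have hKmeas : MeasurableSet K := hKcomp.isClosed.measurableSet
  have hBK : Λ (B \ K) ≤ η / 2 := by
    rw [measure_diff hKB hKmeas.nullMeasurableSet (measure_ne_top Λ K)]
    exact tsub_le_iff_left.2 hKlt.le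
  -- finite subcover
  obtain ⟨t, -, hcover⟩ := hKcomp.elim_nhds_subcover U fun x _ => (hUopen x).mem_nhds (hUmem x)
  set n : ℕ := t.card with hn_def
  set e : Fin n → T := fun i => (t.equivFin.symm i : T) with he_def
  set W : Fin n → Set T := fun i => U (e i) with hW_def
  have hWopen : ∀ i, IsOpen (W i) := fun i => hUopen _
  have hKW : K ⊆ ⋃ i, W i := by
    intro x hx
    obtain ⟨y, hy, hxy⟩ := Set.mem_iUnion₂.1 (hcover hx)
    refine Set.mem_iUnion.2 ⟨t.equivFin ⟨y, hy⟩, ?_⟩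
    simp only [hW_def, he_def, Equiv.symm_apply_apply]
    exact hxy
  -- disjointification
  set A : Fin n → Set T := fun i => (K ∩ W i) \ ⋃ j, ⋃ (_ : j < i), W j with hA_def
  have hAmeas : ∀ i, MeasurableSet (A i) := by
    intro i
    exact ((hKmeas.inter (hWopen i).measurableSet).diff
      (MeasurableSet.iUnion fun j => MeasurableSet.iUnion fun _ => (hWopen j).measurableSet))
  have hAW : ∀ i, A i ⊆ W i := fun i => fun x hx => hx.1.2
  have hAdisj : ∀ i j : Fin n, i ≠ j → Disjoint (A i) (A j) := by
    have aux : ∀ i j : Fin n, i < j → Disjoint (A i) (A j) := by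
      intro i j hij
      refine Set.disjoint_left.2 fun x hxi hxj => ?_
      exact hxj.2 (Set.mem_iUnion₂.2 ⟨i, hij, hxi.1.2⟩)
    intro i j hij
    rcases lt_or_gt_of_ne hij with h | h
    · exact aux i j h
    · exact (aux j i h).symm
  have hKA : K ⊆ ⋃ i, A i := by
    intro x hx
    have hne : (Finset.univ.filter fun i : Fin n => x ∈ W i).Nonempty := by
      obtain ⟨i, hi⟩ := Set.mem_iUnion.1 (hKW hx)
      exact ⟨i, by simp [hi]⟩
    set i := (Finset.univ.filter fun i : Fin n => x ∈ W i).min' hne with hi_def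
    have hiW : x ∈ W i := by
      have := (Finset.univ.filter fun i : Fin n => x ∈ W i).min'_mem hne
      simpa using this
    refine Set.mem_iUnion.2 ⟨i, ⟨⟨hx, hiW⟩, ?_⟩⟩
    intro hmem
    obtain ⟨j, hji, hjW⟩ := Set.mem_iUnion₂.1 hmem
    have : i ≤ j := Finset.min'_le _ j (by simp [hjW])
    exact absurd hji (not_lt.2 this)
  -- inner compacts
  set β : ℝ≥0∞ := (η / 2) / ((n : ℝ≥0∞) + 1) with hβ_def
  have hβ0 : β ≠ 0 := by
    apply ne_of_gt
    exact ENNReal.div_pos hημ (by simp)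
  have hchoose : ∀ i : Fin n, ∃ C ⊆ A i, IsCompact C ∧ Λ (A i) < Λ C + β :=
    fun i => (hAmeas i).exists_isCompact_lt_add (measure_ne_top Λ _) hβ0
  choose C hCA hCcomp hClt using hchoose
  have hCmeas : ∀ i, MeasurableSet (C i) := fun i => (hCcomp i).isClosed.measurableSet
  have hAC : ∀ i, Λ (A i \ C i) ≤ β := by
    intro i
    rw [measure_diff (hCA i) (hCmeas i).nullMeasurableSet (measure_ne_top Λ _)]
    exact tsub_le_iff_left.2 (hClt i).le
  -- separation of the compacts
  have hsep : ∀ i : Fin n, ∃ O Q : Set T, IsOpen O ∧ IsOpen Q ∧ C i ⊆ O ∧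
      (⋃ j ∈ Finset.univ.erase i, C j) ⊆ Q ∧ Disjoint O Q := by
    intro i
    have hD : IsCompact (⋃ j ∈ Finset.univ.erase i, C j) :=
      (Finset.univ.erase i).isCompact_biUnion fun j _ => hCcomp j
    have hdisj : Disjoint (C i) (⋃ j ∈ Finset.univ.erase i, C j) := by
      refine Set.disjoint_left.2 fun x hxi hxD => ?_
      obtain ⟨j, hj, hxj⟩ := Set.mem_iUnion₂.1 hxD
      have hij : j ≠ i := (Finset.mem_erase.1 hj).1
      exact Set.disjoint_left.1 (hAdisj i j (Ne.symm hij)) (hCA i hxi) (hCA j hxj)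
    obtain ⟨O, Q, hO, hQ, hCO, hDQ, hOQ⟩ :=
      SeparatedNhds.of_isCompact_isCompact (hCcomp i) hD hdisj
    exact ⟨O, Q, hO, hQ, hCO, hDQ, hOQ⟩
  choose O Q hOopen hQopen hCO hDQ hOQ using hsep
  -- the disjoint open sets
  set V : Fin n → Set T := fun i => (W i ∩ O i) ∩ ⋂ j ∈ Finset.univ.erase i, Q j with hV_def
  have hVopen : ∀ i, IsOpen (V i) :=
    fun i => ((hWopen i).inter (hOopen i)).inter
      (isOpen_biInter_finset fun j _ => hQopen j)
  have hCV : ∀ i, C i ⊆ V i := by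
    intro i x hx
    refine ⟨⟨hAW i (hCA i hx), hCO i hx⟩, Set.mem_iInter₂.2 fun j hj => ?_⟩
    have hij : i ≠ j := fun h => (Finset.mem_erase.1 hj).1 h.symm
    exact hDQ j (Set.mem_iUnion₂.2 ⟨i, Finset.mem_erase.mpr ⟨hij, Finset.mem_univ i⟩, hx⟩)
  have hVW : ∀ i, V i ⊆ W i := fun i x hx => hx.1.1
  have hVdisj : ∀ i j : Fin n, i ≠ j → Disjoint (V i) (V j) := by
    intro i j hij
    refine (hOQ i).mono (fun x hx => hx.1.2) (fun x hx => ?_)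
    exact Set.mem_iInter₂.1 hx.2 i (Finset.mem_erase.mpr ⟨hij, Finset.mem_univ i⟩)
  -- extend to ℕ
  set V' : ℕ → Set T := fun k => if h : k < n then V ⟨k, h⟩ else ∅ with hV'_def
  have hV'eq : ∀ i : Fin n, V' (i : ℕ) = V i := by
    intro i
    simp only [hV'_def, dif_pos i.isLt]
  refine ⟨V', ?_, ?_, ?_, ?_⟩
  · intro k
    by_cases h : k < n
    · simpa [hV'_def, h] using hVopen ⟨k, h⟩
    · simp [hV'_def, h]
  · intro k l hkl
    unfold Function.onFun
    by_cases hk : k < n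
    · by_cases hl : l < n
      · simp only [hV'_def, dif_pos hk, dif_pos hl]
        exact hVdisj ⟨k, hk⟩ ⟨l, hl⟩ (by simpa using hkl)
      · simp [hV'_def, hl]
    · simp [hV'_def, hk]
  · intro k
    by_cases h : k < n
    · have := hUbase (e ⟨k, h⟩)
      intro f hf f' hf' hne
      refine (this hf hf' hne).mono ?_ ?_ <;>
        · apply Set.smul_set_mono
          simp only [hV'_def, dif_pos h]
          exact hVW ⟨k, h⟩
    · intro f hf f' hf' hne
      simp [hV'_def, h]
  · -- the measure estimate
    set R : Set T := B \ ⋃ i, V i with hR_def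
    have hRsub : R ⊆ (B \ K) ∪ ⋃ i, (A i \ C i) := by
      intro x hx
      by_cases hxK : x ∈ K
      · right
        obtain ⟨i, hAi⟩ := Set.mem_iUnion.1 (hKA hxK)
        refine Set.mem_iUnion.2 ⟨i, hAi, fun hCi => ?_⟩
        exact hx.2 (Set.mem_iUnion.2 ⟨i, hCV i hCi⟩)
      · exact Or.inl ⟨hx.1, hxK⟩
    have hR : Λ R ≤ η := by
      calc Λ R ≤ Λ ((B \ K) ∪ ⋃ i, (A i \ C i)) := measure_mono hRsub
        _ ≤ Λ (B \ K) + Λ (⋃ i, (A i \ C i)) := measure_union_le _ _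
        _ ≤ η / 2 + ∑ i : Fin n, Λ (A i \ C i) := by
            refine add_le_add hBK ?_
            exact le_trans (measure_iUnion_le _) (le_of_eq (tsum_fintype _))
        _ ≤ η / 2 + (n : ℝ≥0∞) * β := by
            gcongr
            calc ∑ i : Fin n, Λ (A i \ C i) ≤ ∑ _i : Fin n, β :=
                  Finset.sum_le_sum fun i _ => hAC i
              _ = (n : ℝ≥0∞) * β := by simp [mul_comm]
        _ ≤ η / 2 + η / 2 := by
            gcongr
            calc (n : ℝ≥0∞) * β ≤ ((n : ℝ≥0∞) + 1) * β :=
                  mul_le_mul_left (le_add_right le_rfl) β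
              _ ≤ η / 2 := ENNReal.mul_div_le
        _ = η := ENNReal.add_halves η
    -- main chain
    have hchain : Λ (⋃ f ∈ F, f • B) ≤ (∑' k, Λ (⋃ f ∈ F, f • V' k)) + s / 2 := by
      have hsplit : (⋃ f ∈ F, f • B) ⊆
          (⋃ i, ⋃ f ∈ F, f • V i) ∪ (⋃ f ∈ F, f • R) := by
        intro x hx
        obtain ⟨f, hf, hxf⟩ := Set.mem_iUnion₂.1 hx
        obtain ⟨y, hy, rfl⟩ := hxf
        by_cases hyV : y ∈ ⋃ i, V i
        · obtain ⟨i, hi⟩ := Set.mem_iUnion.1 hyV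
          exact Or.inl (Set.mem_iUnion.2 ⟨i, Set.mem_iUnion₂.2 ⟨f, hf, ⟨y, hi, rfl⟩⟩⟩)
        · exact Or.inr (Set.mem_iUnion₂.2 ⟨f, hf, ⟨y, ⟨hy, hyV⟩, rfl⟩⟩)
      have h1 : Λ (⋃ f ∈ F, f • B) ≤
          Λ (⋃ i, ⋃ f ∈ F, f • V i) + Λ (⋃ f ∈ F, f • R) :=
        le_trans (measure_mono hsplit) (measure_union_le _ _)
      have h2 : Λ (⋃ i, ⋃ f ∈ F, f • V i) ≤ ∑' k, Λ (⋃ f ∈ F, f • V' k) := by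
        calc Λ (⋃ i, ⋃ f ∈ F, f • V i) ≤ ∑ i : Fin n, Λ (⋃ f ∈ F, f • V i) :=
              le_trans (measure_iUnion_le _) (le_of_eq (tsum_fintype _))
          _ = ∑ i : Fin n, Λ (⋃ f ∈ F, f • V' (i : ℕ)) := by
              refine Finset.sum_congr rfl fun i _ => ?_
              rw [hV'eq i]
          _ = ∑ k ∈ Finset.range n, Λ (⋃ f ∈ F, f • V' k) :=
              Fin.sum_univ_eq_sum_range (fun k => Λ (⋃ f ∈ F, f • V' k)) n
          _ = ∑' k, Λ (⋃ f ∈ F, f • V' k) := by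
              refine (tsum_eq_sum ?_).symm
              intro k hk
              have hkn : ¬ k < n := by simpa using hk
              simp [hV'_def, hkn]
      have h3 : Λ (⋃ f ∈ F, f • R) ≤ s / 2 := by
        calc Λ (⋃ f ∈ F, f • R) ≤ ∑ f ∈ F, Λ (f • R) := measure_biUnion_finset_le F _
          _ = ∑ _f ∈ F, Λ R := Finset.sum_congr rfl fun f _ => hinv f R
          _ = (F.card : ℝ≥0∞) * Λ R := by simp [mul_comm]
          _ ≤ (F.card : ℝ≥0∞) * η := mul_le_mul_right hR _
          _ ≤ s / 2 := hcardη
      calc Λ (⋃ f ∈ F, f • B) ≤ Λ (⋃ i, ⋃ f ∈ F, f • V i) + Λ (⋃ f ∈ F, f • R) := h1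
        _ ≤ (∑' k, Λ (⋃ f ∈ F, f • V' k)) + s / 2 := add_le_add h2 h3
    have hfin : (1 - ε) + s / 2 ≤ ∑' k, Λ (⋃ f ∈ F, f • V' k) := by
      have hsh : s / 2 ≠ ∞ := (ENNReal.div_lt_top hsT two_ne_zero).ne
      have h5 : ((1 - ε) + s / 2) + s / 2 ≤ (∑' k, Λ (⋃ f ∈ F, f • V' k)) + s / 2 := by
        calc ((1 - ε) + s / 2) + s / 2 = (1 - ε) + s := by
              rw [add_assoc, ENNReal.add_halves]
          _ = Λ (⋃ f ∈ F, f • B) := by rw [hs_def, add_tsub_cancel_of_le htower.le]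
          _ ≤ _ := hchain
      exact ENNReal.le_of_add_le_add_right hsh h5
    calc (1 : ℝ≥0∞) - ε < (1 - ε) + s / 2 := by
          apply ENNReal.lt_add_right
          · exact (lt_of_le_of_lt tsub_le_self one_lt_top).ne
          · simpa using hs0
      _ ≤ _ := hfin
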